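/- arXiv:2103.03139 — 2 statements merged into one kernel-verified Lean document; each statement's English description precedes it below -/
import Mathlib

section
/- Lower bound for Rademacher complexity of mixtures: let F be a class of functions X → ℝ and let p_1,...,p_r ≥ 0 with p := Σ_j p_j ≤ 1/2. Define G to be the set of functions of the form (1 - p) f_0 + Σ_j p_j f_j where f_0, f_1,...,f_r ∈ F (with f_0 and the f_j ranging so that every such mixture arising from the noise model belongs to G, and G ⊆ Conv(F)). Then R_S(G) ≥ (1 - 2p) R_S(F) for any sample S, provided that for every f_0 ∈ F there exist f_1,...,f_r ∈ F with (1-p) f_0 + Σ_j p_j f_j ∈ G. -/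
open scoped BigOperators

/-- The set of values `(1/m)|∑ i ε_i f(x_i)|` as `f` ranges over the class `F`,
for a fixed sign pattern `ε`. -/
def radSet {X : Type*} {m : ℕ} (S : Fin m → X) (F : Set (X → ℝ)) (ε : Fin m → Bool) : Set ℝ :=
  (fun f => (1 / (m : ℝ)) * |∑ i, (if ε i then (1 : ℝ) else -1) * f (S i)|) '' F

/-- Empirical Rademacher complexity of a class `F` of real-valued functions on the
sample `S = (x_1, …, x_m)`: the average over uniform signs `ε ∈ {−1,1}^m` of
`sup_{f ∈ F} (1/m)|∑ i ε_i f(x_i)|`. -/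
noncomputable def rad {X : Type*} {m : ℕ} (S : Fin m → X) (F : Set (X → ℝ)) : ℝ :=
  (∑ ε : Fin m → Bool, sSup (radSet S F ε)) / 2 ^ m

/-!
For a fixed sign pattern `ε`, `f ↦ (1/m)|∑ i ε_i f(x_i)|` is a seminorm `q`. The triangle
inequality bounds `q` on a mixture `(1 - P) f₀ + ∑ j, p_j f_j` by `sup_F q`, so the supremum over
`G` is finite, and, read backwards, gives `(1 - P) q f₀ ≤ sup_G q + P sup_F q`. Taking the
supremum over `f₀ ∈ F` yields `(1 - 2P) sup_F q ≤ sup_G q`; averaging over `ε` gives the theorem.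
-/

namespace Seminorm

variable {E ι : Type*} [AddCommGroup E] [Module ℝ E] [Fintype ι] (q : Seminorm ℝ E)

theorem map_sum_smul_le {b : ι → ℝ} (hb : ∀ j, 0 ≤ b j) (y : ι → E) :
    q (∑ j, b j • y j) ≤ ∑ j, b j * q (y j) :=
  calc q (∑ j, b j • y j) ≤ ∑ j, q (b j • y j) :=
        Finset.le_sum_of_subadditive q (map_zero q).le (map_add_le_add q) _ _
    _ = ∑ j, b j * q (y j) := by
        simp only [map_smul_eq_mul, Real.norm_eq_abs, abs_of_nonneg (hb _)]

theorem map_mixture_le {a : ℝ} {b : ι → ℝ} (ha : 0 ≤ a) (hb : ∀ j, 0 ≤ b j) (x : E)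
    (y : ι → E) : q (a • x + ∑ j, b j • y j) ≤ a * q x + ∑ j, b j * q (y j) :=
  calc q (a • x + ∑ j, b j • y j) ≤ q (a • x) + q (∑ j, b j • y j) := map_add_le_add q _ _
    _ ≤ a * q x + ∑ j, b j * q (y j) := by
        rw [map_smul_eq_mul, Real.norm_eq_abs, abs_of_nonneg ha]
        gcongr
        exact q.map_sum_smul_le hb y

theorem mul_le_map_mixture_add {a : ℝ} {b : ι → ℝ} (ha : 0 ≤ a) (hb : ∀ j, 0 ≤ b j) (x : E)
    (y : ι → E) : a * q x ≤ q (a • x + ∑ j, b j • y j) + ∑ j, b j * q (y j) :=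
  calc a * q x = q ((a • x + ∑ j, b j • y j) - ∑ j, b j • y j) := by
        rw [add_sub_cancel_right, map_smul_eq_mul, Real.norm_eq_abs, abs_of_nonneg ha]
    _ ≤ q (a • x + ∑ j, b j • y j) + q (∑ j, b j • y j) := map_sub_le_add q _ _
    _ ≤ q (a • x + ∑ j, b j • y j) + ∑ j, b j * q (y j) := by
        gcongr
        exact q.map_sum_smul_le hb y

theorem map_mixture_le_of_forall_le {F : Set E} {M : ℝ} (hM : ∀ f ∈ F, q f ≤ M) {p : ι → ℝ}
    (hp : ∀ j, 0 ≤ p j) (hP : ∑ j, p j ≤ 1) {f₀ : E} (hf₀ : f₀ ∈ F) {f : ι → E}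
    (hf : ∀ j, f j ∈ F) : q ((1 - ∑ j, p j) • f₀ + ∑ j, p j • f j) ≤ M :=
  calc q ((1 - ∑ j, p j) • f₀ + ∑ j, p j • f j)
      ≤ (1 - ∑ j, p j) * q f₀ + ∑ j, p j * q (f j) := q.map_mixture_le (by linarith) hp f₀ f
    _ ≤ (1 - ∑ j, p j) * M + ∑ j, p j * M := by
        gcongr with j
        · exact hM f₀ hf₀
        · exact hp j
        · exact hM (f j) (hf j)
    _ = M := by rw [← Finset.sum_mul]; ring

theorem one_sub_two_mul_sSup_image_le {F G : Set E} (hbdd : BddAbove (q '' F)) {p : ι → ℝ}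
    (hp : ∀ j, 0 ≤ p j) (hP : ∑ j, p j < 1)
    (hGform : ∀ g ∈ G, ∃ f₀ ∈ F, ∃ f : ι → E, (∀ j, f j ∈ F) ∧
      g = (1 - ∑ j, p j) • f₀ + ∑ j, p j • f j)
    (hcover : ∀ f₀ ∈ F, ∃ f : ι → E, (∀ j, f j ∈ F) ∧
      ((1 - ∑ j, p j) • f₀ + ∑ j, p j • f j) ∈ G) :
    (1 - 2 * ∑ j, p j) * sSup (q '' F) ≤ sSup (q '' G) := by
  set P := ∑ j, p j
  set M := sSup (q '' F)
  have hP1 : 0 < 1 - P := by linarith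
  have hFM : ∀ f ∈ F, q f ≤ M := fun f hf => le_csSup hbdd (Set.mem_image_of_mem q hf)
  have hGbdd : BddAbove (q '' G) := by
    refine ⟨M, Set.forall_mem_image.2 fun g hg => ?_⟩
    obtain ⟨f₀, hf₀, f, hf, rfl⟩ := hGform g hg
    exact q.map_mixture_le_of_forall_le hFM hp (by linarith) hf₀ hf
  have hFG : ∀ f₀ ∈ F, (1 - P) * q f₀ ≤ sSup (q '' G) + P * M := by
    intro f₀ hf₀
    obtain ⟨f, hf, hg⟩ := hcover f₀ hf₀
    calc (1 - P) * q f₀ ≤ q ((1 - P) • f₀ + ∑ j, p j • f j) + ∑ j, p j * q (f j) :=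
          q.mul_le_map_mixture_add hP1.le hp f₀ f
      _ ≤ sSup (q '' G) + ∑ j, p j * M := by
          gcongr with j
          · exact le_csSup hGbdd (Set.mem_image_of_mem q hg)
          · exact hp j
          · exact hFM (f j) (hf j)
      _ = sSup (q '' G) + P * M := by rw [← Finset.sum_mul]
  have hP0 : 0 ≤ P := Finset.sum_nonneg fun j _ => hp j
  have hM0 : 0 ≤ M := Real.sSup_nonneg <| Set.forall_mem_image.2 fun f _ => apply_nonneg q f
  have hG0 : 0 ≤ sSup (q '' G) :=
    Real.sSup_nonneg <| Set.forall_mem_image.2 fun f _ => apply_nonneg q f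
  -- `Real.sSup_le` needs no nonemptiness: it also covers `F = ∅`, where `sSup ∅ = 0`.
  have hM : (1 - P) * M ≤ sSup (q '' G) + P * M := by
    rw [← le_div_iff₀' hP1]
    refine Real.sSup_le (Set.forall_mem_image.2 fun f hf => ?_) (by positivity)
    rw [le_div_iff₀' hP1]
    exact hFG f hf
  linarith

end Seminorm

noncomputable def rademacherSeminorm {X : Type*} {m : ℕ} (S : Fin m → X) (ε : Fin m → Bool) :
    Seminorm ℝ (X → ℝ) :=
  (normSeminorm ℝ ℝ).comp
    ((1 / (m : ℝ)) • ∑ i, (if ε i then (1 : ℝ) else -1) • LinearMap.proj (R := ℝ) (S i))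

theorem radSet_eq_image_rademacherSeminorm {X : Type*} {m : ℕ} (S : Fin m → X)
    (F : Set (X → ℝ)) (ε : Fin m → Bool) : radSet S F ε = rademacherSeminorm S ε '' F := by
  refine Set.image_congr fun f _ => ?_
  simp only [rademacherSeminorm, Seminorm.comp_apply, coe_normSeminorm, Real.norm_eq_abs,
    LinearMap.smul_apply, LinearMap.coe_sum, LinearMap.coe_smul, LinearMap.coe_proj,
    Finset.sum_apply, Pi.smul_apply, Function.eval, smul_eq_mul, abs_mul,
    abs_of_nonneg (by positivity : (0 : ℝ) ≤ 1 / m)]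

theorem rad_mixture_lower_bound_general {X : Type*} {m r : ℕ} (S : Fin m → X)
    (F G : Set (X → ℝ))
    (hbdd : ∀ ε : Fin m → Bool, BddAbove (radSet S F ε))
    (p : Fin r → ℝ) (hp : ∀ j, 0 ≤ p j) (hp2 : ∑ j, p j ≤ 1 / 2)
    (hGform : ∀ g ∈ G, ∃ f₀ ∈ F, ∃ f : Fin r → X → ℝ, (∀ j, f j ∈ F) ∧
      g = (1 - ∑ j, p j) • f₀ + ∑ j, p j • f j)
    (hcover : ∀ f₀ ∈ F, ∃ f : Fin r → X → ℝ, (∀ j, f j ∈ F) ∧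
      ((1 - ∑ j, p j) • f₀ + ∑ j, p j • f j) ∈ G) :
    (1 - 2 * ∑ j, p j) * rad S F ≤ rad S G := by
  rw [rad, rad, ← mul_div_assoc, Finset.mul_sum]
  gcongr with ε
  simp only [radSet_eq_image_rademacherSeminorm] at hbdd ⊢
  exact (rademacherSeminorm S ε).one_sub_two_mul_sSup_image_le (hbdd ε) hp (by linarith) hGform
    hcover

/-- Lower bound for the Rademacher complexity of the class `G` of noisy mixtures
`(1 - ∑ j, p j) f₀ + ∑ j, p j • f j` of functions from `F`, where `∑ j, p j ≤ 1/2`: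
`R_S(G) ≥ (1 - 2 ∑ j, p j) R_S(F)`. -/
theorem rad_mixture_lower_bound {X : Type*} {m r : ℕ} (S : Fin m → X)
    (F G : Set (X → ℝ)) (hF : F.Nonempty)
    (hbdd : ∀ ε : Fin m → Bool, BddAbove (radSet S F ε))
    (p : Fin r → ℝ) (hp : ∀ j, 0 ≤ p j) (hp2 : ∑ j, p j ≤ 1 / 2)
    (hGform : ∀ g ∈ G, ∃ f₀ ∈ F, ∃ f : Fin r → X → ℝ, (∀ j, f j ∈ F) ∧
      g = (1 - ∑ j, p j) • f₀ + ∑ j, p j • f j)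
    (hcover : ∀ f₀ ∈ F, ∃ f : Fin r → X → ℝ, (∀ j, f j ∈ F) ∧
      ((1 - ∑ j, p j) • f₀ + ∑ j, p j • f j) ∈ G) :
    (1 - 2 * ∑ j, p j) * rad S F ≤ rad S G :=
  rad_mixture_lower_bound_general S F G hbdd p hp hp2 hGform hcover
end

section
/- Robustness lower bound for Rademacher complexity: let F, G be classes of real-valued functions on X and γ ≥ 0 be such that for every f ∈ F there exist g_1, g_2 ∈ Conv(G) with f = (1+γ) g_1 − γ g_2. Then for any sample S, R_S(F) ≤ (1 + 2γ) R_S(G), equivalently R_S(G) ≥ (1+2γ)^{-1} R_S(F). -/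
open scoped BigOperators

/-
The absolute value of a linear functional `φ` is convex, so a bound `|φ g| ≤ c` on `G` extends to
`Conv(G)`. On `(1+γ) g₁ - γ g₂` the triangle inequality then gives `(1+γ) c + γ c = (1+2γ) c`.
Taking `φ f = (1/m) ∑ ε_i f(x_i)` and `c = sup_{g ∈ G} |φ g|` bounds the supremum over `F` for each
sign pattern `ε`, and averaging over `ε` gives the theorem.
-/

section LinearFunctional

variable {E : Type*} [AddCommGroup E] [Module ℝ E]

theorem abs_map_le_of_mem_convexHull (φ : E →ₗ[ℝ] ℝ) {G : Set E} {c : ℝ}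
    (hG : ∀ g ∈ G, |φ g| ≤ c) {g : E} (hg : g ∈ convexHull ℝ G) : |φ g| ≤ c := by
  have hconvex : Convex ℝ {x : E | |φ x| ≤ c} := by
    simpa only [abs_le, Set.preimage, Set.mem_Icc] using (convex_Icc (-c) c).linear_preimage φ
  exact convexHull_min hG hconvex hg

theorem abs_map_one_add_smul_sub_smul_le (φ : E →ₗ[ℝ] ℝ) {γ c : ℝ} (hγ : 0 ≤ γ) {g₁ g₂ : E}
    (h₁ : |φ g₁| ≤ c) (h₂ : |φ g₂| ≤ c) :
    |φ ((1 + γ) • g₁ - γ • g₂)| ≤ (1 + 2 * γ) * c := by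
  rw [map_sub, map_smul, map_smul, smul_eq_mul, smul_eq_mul]
  calc |(1 + γ) * φ g₁ - γ * φ g₂|
      ≤ |(1 + γ) * φ g₁| + |γ * φ g₂| := abs_sub _ _
    _ = (1 + γ) * |φ g₁| + γ * |φ g₂| := by
        rw [abs_mul, abs_mul, abs_of_nonneg (by linarith), abs_of_nonneg hγ]
    _ ≤ (1 + γ) * c + γ * c := by gcongr
    _ = (1 + 2 * γ) * c := by ring

end LinearFunctional

section Rademacher

variable {X : Type*} {m : ℕ}

noncomputable def signedMean (S : Fin m → X) (ε : Fin m → Bool) : (X → ℝ) →ₗ[ℝ] ℝ :=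
  (1 / (m : ℝ)) • ∑ i, (if ε i then (1 : ℝ) else -1) • LinearMap.proj (S i)

theorem signedMean_apply (S : Fin m → X) (ε : Fin m → Bool) (f : X → ℝ) :
    signedMean S ε f = 1 / (m : ℝ) * ∑ i, (if ε i then (1 : ℝ) else -1) * f (S i) := by
  simp only [signedMean, LinearMap.smul_apply, LinearMap.sum_apply,
    LinearMap.proj_apply, smul_eq_mul]

theorem radSet_eq_image_abs_signedMean (S : Fin m → X) (F : Set (X → ℝ)) (ε : Fin m → Bool) :
    radSet S F ε = (fun f => |signedMean S ε f|) '' F := by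
  refine Set.image_congr fun f _ => ?_
  rw [signedMean_apply, abs_mul, abs_of_nonneg (a := 1 / (m : ℝ)) (by positivity)]

theorem sSup_radSet_le_of_robust_decomposition (S : Fin m → X) (F G : Set (X → ℝ))
    (ε : Fin m → Bool) (hbddG : BddAbove (radSet S G ε)) {γ : ℝ} (hγ : 0 ≤ γ)
    (hdec : ∀ f ∈ F, ∃ g₁ ∈ convexHull ℝ G, ∃ g₂ ∈ convexHull ℝ G,
      f = (1 + γ) • g₁ - γ • g₂) :
    sSup (radSet S F ε) ≤ (1 + 2 * γ) * sSup (radSet S G ε) := by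
  simp only [radSet_eq_image_abs_signedMean] at hbddG ⊢
  set φ := signedMean S ε
  have hG : ∀ g ∈ G, |φ g| ≤ sSup ((fun g => |φ g|) '' G) :=
    fun g hg => le_csSup hbddG (Set.mem_image_of_mem _ hg)
  have hsup_nonneg : 0 ≤ sSup ((fun g => |φ g|) '' G) :=
    Real.sSup_nonneg (by rintro _ ⟨g, -, rfl⟩; exact abs_nonneg _)
  refine Real.sSup_le ?_ (by positivity)
  rintro _ ⟨f, hf, rfl⟩
  obtain ⟨g₁, hg₁, g₂, hg₂, rfl⟩ := hdec f hf
  exact abs_map_one_add_smul_sub_smul_le φ hγ (abs_map_le_of_mem_convexHull φ hG hg₁)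
    (abs_map_le_of_mem_convexHull φ hG hg₂)

end Rademacher

theorem rad_robustness_bound_general {X : Type*} {m : ℕ} (S : Fin m → X)
    (F G : Set (X → ℝ))
    (hbddG : ∀ ε : Fin m → Bool, BddAbove (radSet S G ε))
    (γ : ℝ) (hγ : 0 ≤ γ)
    (hdec : ∀ f ∈ F, ∃ g₁ ∈ convexHull ℝ G, ∃ g₂ ∈ convexHull ℝ G,
      f = (1 + γ) • g₁ - γ • g₂) :
    rad S F ≤ (1 + 2 * γ) * rad S G := by
  rw [rad, rad, mul_div_assoc', Finset.mul_sum]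
  gcongr with ε
  exact sSup_radSet_le_of_robust_decomposition S F G ε (hbddG ε) hγ hdec

/-- Robustness lower bound: if every `f ∈ F` decomposes as `(1+γ) g₁ - γ g₂` with
`g₁, g₂ ∈ Conv(G)`, then `R_S(F) ≤ (1 + 2γ) R_S(G)`. -/
theorem rad_robustness_bound {X : Type*} {m : ℕ} (S : Fin m → X)
    (F G : Set (X → ℝ)) (hF : F.Nonempty) (hG : G.Nonempty)
    (hbddF : ∀ ε : Fin m → Bool, BddAbove (radSet S F ε))
    (hbddG : ∀ ε : Fin m → Bool, BddAbove (radSet S G ε))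
    (γ : ℝ) (hγ : 0 ≤ γ)
    (hdec : ∀ f ∈ F, ∃ g₁ ∈ convexHull ℝ G, ∃ g₂ ∈ convexHull ℝ G,
      f = (1 + γ) • g₁ - γ • g₂) :
    rad S F ≤ (1 + 2 * γ) * rad S G :=
  rad_robustness_bound_general S F G hbddG γ hγ hdec
end
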